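/- arXiv:1703.05907 — 3 statements merged into one kernel-verified Lean document; each statement's English description precedes it below -/
import Mathlib

section
/- Let G=(V,E) be a finite directed graph and let u1, u2, v1, v2 be four distinct vertices of G. Let G'=(V∪{w}, E∪{(u2,w),(w,v1)}) be the directed graph obtained from G by adding a new vertex w not in V together with the two directed edges (u2,w) and (w,v1). Then there exist a simple path from u1 to u2 in G and a simple path from v1 to v2 in G whose vertex sets are disjoint, if and only if there exists a simple path from u1 to v2 in G' that visits w. -/
/-- The list of directed edges traversed by a walk given as its list of vertices. -/
def walkEdges {V : Type} (l : List V) : List (V × V) := l.zip l.tail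

/-- `l` is (the vertex list of) a walk from `a` to `b` in the directed graph with edge set `E`. -/
def IsWalk {V : Type} (E : Set (V × V)) (a b : V) (l : List V) : Prop :=
  l ≠ [] ∧ l.head? = some a ∧ l.getLast? = some b ∧ ∀ p ∈ walkEdges l, p ∈ E

/-- A simple path: a walk all of whose vertices are distinct. -/
def IsSimplePath {V : Type} (E : Set (V × V)) (a b : V) (l : List V) : Prop :=
  IsWalk E a b l ∧ l.Nodup

/-- The graph `G'` obtained from `G = (V, E)` by adding a new vertex `w` (modelled as
`none : Option V`) together with the edges `(u₂, w)` and `(w, v₁)`. -/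
def extGraph {V : Type} (E : Set (V × V)) (u₂ v₁ : V) : Set (Option V × Option V) :=
  {p | ∃ a b, (a, b) ∈ E ∧ p = (some a, some b)} ∪ {(some u₂, none), (none, some v₁)}

/-! A simple path of `G'` through `w` has the form `l₁ ++ [w] ++ l₂` with `l₁, l₂` paths of `G`.
The only edges into and out of `w` are `(u₂, w)` and `(w, v₁)`, so `l₁` must end at `u₂` and
`l₂` must start at `v₁`; and a vertex repeated in the whole path is exactly one repeated within
`l₁`, within `l₂`, or shared between them. -/

variable {V : Type}

theorem forall_mem_walkEdges_iff_isChain (E : Set (V × V)) :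
    ∀ l : List V, (∀ p ∈ walkEdges l, p ∈ E) ↔ l.IsChain (fun x y => (x, y) ∈ E)
  | [] | [_] => by simp [walkEdges]
  | a :: b :: l => by
    simp [walkEdges, ← forall_mem_walkEdges_iff_isChain E (b :: l)]

theorem isWalk_iff_isChain {E : Set (V × V)} {a b : V} {l : List V} :
    IsWalk E a b l ↔
      l.head? = some a ∧ l.getLast? = some b ∧ l.IsChain (fun x y => (x, y) ∈ E) := by
  rw [IsWalk, forall_mem_walkEdges_iff_isChain, and_iff_right_of_imp]
  rintro ⟨ha, -⟩ rfl
  simp at ha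

theorem exists_eq_map_some_of_none_notMem {α : Type*} :
    ∀ {l : List (Option α)}, none ∉ l → ∃ l' : List α, l = l'.map some
  | [], _ => ⟨[], rfl⟩
  | none :: _, h => absurd List.mem_cons_self h
  | some a :: _, h =>
    let ⟨l', hl'⟩ := exists_eq_map_some_of_none_notMem (mt (List.mem_cons_of_mem _) h)
    ⟨a :: l', by simp [hl']⟩

section extGraph

variable {E : Set (V × V)} {u₂ v₁ : V}

@[simp]
theorem some_some_mem_extGraph {a b : V} :
    (some a, some b) ∈ extGraph E u₂ v₁ ↔ (a, b) ∈ E := by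
  simp [extGraph]

@[simp]
theorem mem_extGraph_none_right {x : Option V} :
    (x, none) ∈ extGraph E u₂ v₁ ↔ x = some u₂ := by
  simp [extGraph]

@[simp]
theorem mem_extGraph_none_left {y : Option V} :
    (none, y) ∈ extGraph E u₂ v₁ ↔ y = some v₁ := by
  simp [extGraph]

end extGraph

def joinViaNone (l₁ l₂ : List V) : List (Option V) :=
  l₁.map some ++ none :: l₂.map some

theorem exists_eq_joinViaNone {l : List (Option V)} (hl : l.Nodup) (hw : none ∈ l) :
    ∃ l₁ l₂, l = joinViaNone l₁ l₂ := by
  obtain ⟨A, B, rfl⟩ := List.append_of_mem hw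
  simp only [List.nodup_append, List.nodup_cons] at hl
  obtain ⟨l₁, rfl⟩ :=
    exists_eq_map_some_of_none_notMem fun h => hl.2.2 _ h _ List.mem_cons_self rfl
  obtain ⟨l₂, rfl⟩ := exists_eq_map_some_of_none_notMem hl.2.1.1
  exact ⟨l₁, l₂, rfl⟩

theorem isWalk_joinViaNone_iff {E : Set (V × V)} {u₂ v₁ a b : V} {l₁ l₂ : List V} :
    IsWalk (extGraph E u₂ v₁) (some a) (some b) (joinViaNone l₁ l₂) ↔
      IsWalk E a u₂ l₁ ∧ IsWalk E v₁ b l₂ := by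
  simp only [isWalk_iff_isChain, joinViaNone, List.isChain_append, List.isChain_cons,
    List.isChain_map, List.head?_append, List.getLast?_append, List.getLast?_cons,
    List.head?_map, List.getLast?_map, List.head?_cons]
  cases l₁ <;> cases l₂ <;> simp [List.getLast?_eq_some_getLast]
  tauto

theorem nodup_joinViaNone_iff {l₁ l₂ : List V} :
    (joinViaNone l₁ l₂).Nodup ↔ l₁.Nodup ∧ l₂.Nodup ∧ ∀ x ∈ l₁, x ∉ l₂ := by
  simp [joinViaNone, List.nodup_append, List.nodup_map_iff (Option.some_injective V)]
  grind

theorem isSimplePath_joinViaNone_iff {E : Set (V × V)} {u₁ u₂ v₁ v₂ : V} {l₁ l₂ : List V} :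
    IsSimplePath (extGraph E u₂ v₁) (some u₁) (some v₂) (joinViaNone l₁ l₂) ↔
      IsSimplePath E u₁ u₂ l₁ ∧ IsSimplePath E v₁ v₂ l₂ ∧ ∀ x ∈ l₁, x ∉ l₂ := by
  simp only [IsSimplePath, isWalk_joinViaNone_iff, nodup_joinViaNone_iff]
  tauto

theorem stmt1_general {V : Type} (E : Set (V × V)) (u₁ u₂ v₁ v₂ : V) :
    (∃ l₁ l₂ : List V, IsSimplePath E u₁ u₂ l₁ ∧ IsSimplePath E v₁ v₂ l₂ ∧
        ∀ x ∈ l₁, x ∉ l₂) ↔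
      (∃ l : List (Option V), IsSimplePath (extGraph E u₂ v₁) (some u₁) (some v₂) l ∧
        none ∈ l) := by
  constructor
  · rintro ⟨l₁, l₂, h⟩
    exact ⟨joinViaNone l₁ l₂, isSimplePath_joinViaNone_iff.2 h, by simp [joinViaNone]⟩
  · rintro ⟨l, hl, hw⟩
    obtain ⟨l₁, l₂, rfl⟩ := exists_eq_joinViaNone hl.2 hw
    exact ⟨l₁, l₂, isSimplePath_joinViaNone_iff.1 hl⟩

/-- There exist vertex-disjoint simple paths `u₁ → u₂` and `v₁ → v₂` in `G` iff there is a
simple path from `u₁` to `v₂` in `G'` visiting the new vertex `w`. -/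
theorem stmt1 {V : Type} [Fintype V] (E : Set (V × V)) (u₁ u₂ v₁ v₂ : V)
    (h12 : u₁ ≠ u₂) (h13 : u₁ ≠ v₁) (h14 : u₁ ≠ v₂)
    (h23 : u₂ ≠ v₁) (h24 : u₂ ≠ v₂) (h34 : v₁ ≠ v₂) :
    (∃ l₁ l₂ : List V, IsSimplePath E u₁ u₂ l₁ ∧ IsSimplePath E v₁ v₂ l₂ ∧
        ∀ x ∈ l₁, x ∉ l₂) ↔
      (∃ l : List (Option V), IsSimplePath (extGraph E u₂ v₁) (some u₁) (some v₂) l ∧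
        none ∈ l) :=
  stmt1_general E u₁ u₂ v₁ v₂
end

section
/- Let I = {i_1, …, i_m} be a finite set of m items and let S_1, …, S_n be subsets of I. Construct the flow network with vertex set {s,t} ∪ {u_1,…,u_m} ∪ {v_1,…,v_n}, with an edge (s,u_j) of capacity 1 for every j, an edge (u_j,v_k) of capacity m whenever i_j ∈ S_k, and an edge (v_k,t) of capacity m for every k (capacity m never binds and plays the role of infinite capacity). Then for every subset T ⊆ {1,…,n}, the group maximum flow through the node set {v_k : k ∈ T} equals the coverage size |⋃_{k∈T} S_k|. -/
/-- An `s`-`t` path (all edges distinct) that visits at least one vertex of the group `C`. -/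
def IsGroupPath {V : Type} (E : Set (V × V)) (s t : V) (C : Set V) (l : List V) : Prop :=
  IsWalk E s t l ∧ (walkEdges l).Nodup ∧ ∃ x ∈ C, x ∈ l

/-- A flow through the group `C`: nonnegative, supported on `s`-`t` paths visiting `C`, and
respecting the edge capacities. -/
def IsGroupFlow {V : Type} (E : Finset (V × V)) (c : V × V → ℝ) (s t : V) (C : Set V)
    (f : List V → ℝ) : Prop :=
  (∀ l, 0 ≤ f l) ∧
  (∀ l, ¬ IsGroupPath (↑E) s t C l → f l = 0) ∧
  ∀ e ∈ E, (∑ᶠ l ∈ {l : List V | IsGroupPath (↑E) s t C l ∧ e ∈ walkEdges l}, f l) ≤ c e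

/-- The group maximum flow `GF(C)`: the maximum value of a flow through `C`
(this is `0` for `C = ∅`). -/
noncomputable def GF {V : Type} (E : Finset (V × V)) (c : V × V → ℝ) (s t : V)
    (C : Set V) : ℝ :=
  sSup {v : ℝ | ∃ f : List V → ℝ, IsGroupFlow E c s t C f ∧
    v = ∑ᶠ l ∈ {l : List V | IsGroupPath (↑E) s t C l}, f l}

/-- The vertices of the maximum-coverage flow network: a source `src`, a sink `snk`,
one vertex `item j` per item `i_j`, and one vertex `grp k` per set `S_k`. -/
inductive NetVert (m n : ℕ) : Type where
  | src : NetVert m n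
  | snk : NetVert m n
  | item : Fin m → NetVert m n
  | grp : Fin n → NetVert m n
  deriving DecidableEq, Fintype

/-- The edges of the maximum-coverage flow network: `(src, item j)` for every `j`,
`(item j, grp k)` whenever item `j` belongs to `S k`, and `(grp k, snk)` for every `k`. -/
def netEdges (m n : ℕ) (S : Fin n → Finset (Fin m)) :
    Finset (NetVert m n × NetVert m n) :=
  (Finset.univ.image fun j : Fin m => (NetVert.src, NetVert.item j)) ∪
  (((Finset.univ ×ˢ Finset.univ : Finset (Fin m × Fin n)).filter
      (fun p => p.1 ∈ S p.2)).image fun p => (NetVert.item p.1, NetVert.grp p.2)) ∪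
  (Finset.univ.image fun k : Fin n => (NetVert.grp k, NetVert.snk))

/-- The capacities: `1` on the edges `(src, item j)` and `m` (an effectively infinite
capacity, never binding) everywhere else. -/
def netCap (m n : ℕ) : NetVert m n × NetVert m n → ℝ
  | (NetVert.src, NetVert.item _) => 1
  | _ => (m : ℝ)

namespace MaxCovAux
open NetVert Finset

variable {m n : ℕ}

/-- The canonical 3-edge path through item `j` and group `k`. -/
def path3 (j : Fin m) (k : Fin n) : List (NetVert m n) := [src, item j, grp k, snk]

lemma walkEdges_path3 (j : Fin m) (k : Fin n) :
    walkEdges (path3 j k) = [(src, item j), (item j, grp k), (grp k, snk)] := rfl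

lemma mem_netEdges (S : Fin n → Finset (Fin m)) {e : NetVert m n × NetVert m n} :
    e ∈ netEdges m n S ↔ (∃ j, e = (src, item j)) ∨
      (∃ j k, j ∈ S k ∧ e = (item j, grp k)) ∨ (∃ k, e = (grp k, snk)) := by
  simp only [netEdges, Finset.mem_union, Finset.mem_image, Finset.mem_filter,
    Finset.mem_product, Finset.mem_univ, true_and, and_true, Prod.exists]
  constructor
  · rintro ((⟨j, hj⟩ | ⟨j, k, hk, hj⟩) | ⟨k, hk⟩)
    · exact Or.inl ⟨j, hj.symm⟩
    · exact Or.inr (Or.inl ⟨j, k, hk, hj.symm⟩)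
    · exact Or.inr (Or.inr ⟨k, hk.symm⟩)
  · rintro (⟨j, hj⟩ | ⟨j, k, hk, hj⟩ | ⟨k, hk⟩)
    · exact Or.inl (Or.inl ⟨j, hj.symm⟩)
    · exact Or.inl (Or.inr ⟨j, k, hk, hj.symm⟩)
    · exact Or.inr ⟨k, hk.symm⟩

lemma isGroupPath_iff (S : Fin n → Finset (Fin m)) (T : Finset (Fin n))
    {l : List (NetVert m n)} :
    IsGroupPath (↑(netEdges m n S)) src snk {x : NetVert m n | ∃ k ∈ T, x = grp k} l ↔
      ∃ j k, j ∈ S k ∧ k ∈ T ∧ l = path3 j k := by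
  constructor
  · rintro ⟨⟨hne, hhead, hlast, hE⟩, hnd, x, hxC, hxl⟩
    simp only [Finset.mem_coe] at hE
    match l with
    | [] => exact absurd rfl hne
    | [a] =>
      simp only [List.head?, List.getLast?] at hhead hlast
      rw [Option.some_inj] at hhead hlast
      subst hhead; exact absurd (hlast.symm.trans rfl) (by simp)
    | a :: b :: rest =>
      have ha : a = src := by simpa using hhead
      subst ha
      have h1 : (src, b) ∈ netEdges m n S := hE _ (by simp [walkEdges])
      obtain ⟨j, hb⟩ : ∃ j, b = item j := by
        rcases (mem_netEdges S).mp h1 with ⟨j, hj⟩ | ⟨j, k, _, hj⟩ | ⟨k, hk⟩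
        · exact ⟨j, by simpa using hj⟩
        · simp at hj
        · simp at hk
      subst hb
      match rest with
      | [] => simp [List.getLast?] at hlast
      | c :: rest2 =>
        have h2 : (item j, c) ∈ netEdges m n S := hE _ (by simp [walkEdges])
        obtain ⟨k, hjk, hc⟩ : ∃ k, j ∈ S k ∧ c = grp k := by
          rcases (mem_netEdges S).mp h2 with ⟨j', hj'⟩ | ⟨j', k, hk, hj'⟩ | ⟨k, hk⟩
          · simp at hj'
          · obtain ⟨h1', h2'⟩ := Prod.mk.injEq _ _ _ _ ▸ hj'
            obtain rfl : j = j' := by simpa using h1'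
            exact ⟨k, hk, h2'⟩
          · simp at hk
        subst hc
        match rest2 with
        | [] => simp [List.getLast?] at hlast
        | d :: rest3 =>
          have h3 : (grp k, d) ∈ netEdges m n S := hE _ (by simp [walkEdges])
          have hd : d = snk := by
            rcases (mem_netEdges S).mp h3 with ⟨j', hj'⟩ | ⟨j', k', _, hj'⟩ | ⟨k', hk'⟩
            · simp at hj'
            · simp at hj'
            · simpa using (Prod.mk.injEq _ _ _ _ ▸ hk').2
          subst hd
          match rest3 with
          | [] =>
            refine ⟨j, k, hjk, ?_, rfl⟩
            obtain ⟨k', hk'T, rfl⟩ := hxC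
            have : k' = k := by
              simp only [List.mem_cons, List.not_mem_nil, or_false] at hxl
              rcases hxl with h | h | h | h <;> simp_all
            exact this ▸ hk'T
          | e :: rest4 =>
            have h4 : (snk, e) ∈ netEdges m n S := hE _ (by simp [walkEdges])
            rcases (mem_netEdges S).mp h4 with ⟨j', hj'⟩ | ⟨j', k', _, hj'⟩ | ⟨k', hk'⟩ <;>
              simp_all
  · rintro ⟨j, k, hjk, hkT, rfl⟩
    refine ⟨⟨by simp [path3], rfl, rfl, ?_⟩, ?_, grp k, ⟨k, hkT, rfl⟩, by simp [path3]⟩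
    · intro p hp
      rw [walkEdges_path3] at hp
      simp only [List.mem_cons, List.not_mem_nil, or_false, Finset.mem_coe] at hp ⊢
      rcases hp with rfl | rfl | rfl
      · exact (mem_netEdges S).mpr (Or.inl ⟨j, rfl⟩)
      · exact (mem_netEdges S).mpr (Or.inr (Or.inl ⟨j, k, hjk, rfl⟩))
      · exact (mem_netEdges S).mpr (Or.inr (Or.inr ⟨k, rfl⟩))
    · rw [walkEdges_path3]; simp

variable (S : Fin n → Finset (Fin m)) (T : Finset (Fin n))

/-- The pairs `(j,k)` with `j ∈ S k` and `k ∈ T`. -/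
def P : Finset (Fin m × Fin n) :=
  (Finset.univ ×ˢ Finset.univ).filter fun p => p.1 ∈ S p.2 ∧ p.2 ∈ T

/-- The finite set of all group paths. -/
def Q : Finset (List (NetVert m n)) := (P S T).image fun p => path3 p.1 p.2

lemma path3_inj {j j' : Fin m} {k k' : Fin n} (h : path3 j k = path3 j' k') :
    j = j' ∧ k = k' := by
  simpa [path3] using h

lemma groupPathSet_eq :
    {l : List (NetVert m n) |
        IsGroupPath (↑(netEdges m n S)) src snk {x : NetVert m n | ∃ k ∈ T, x = grp k} l}
      = ↑(Q S T) := by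
  ext l
  simp only [Set.mem_setOf_eq, isGroupPath_iff S T, Finset.mem_coe, Q, Finset.mem_image, P,
    Finset.mem_filter, Finset.mem_product, Finset.mem_univ, true_and, Prod.exists]
  constructor
  · rintro ⟨j, k, h1, h2, rfl⟩; exact ⟨j, k, ⟨h1, h2⟩, rfl⟩
  · rintro ⟨j, k, ⟨h1, h2⟩, rfl⟩; exact ⟨j, k, h1, h2, rfl⟩

lemma finsum_groupPath (f : List (NetVert m n) → ℝ) :
    (∑ᶠ l ∈ {l : List (NetVert m n) |
        IsGroupPath (↑(netEdges m n S)) src snk {x : NetVert m n | ∃ k ∈ T, x = grp k} l}, f l)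
      = ∑ l ∈ Q S T, f l := by
  rw [groupPathSet_eq, finsum_mem_coe_finset]

lemma filterSet_eq (e : NetVert m n × NetVert m n) :
    {l : List (NetVert m n) |
        IsGroupPath (↑(netEdges m n S)) src snk {x : NetVert m n | ∃ k ∈ T, x = grp k} l
          ∧ e ∈ walkEdges l}
      = ↑((Q S T).filter fun l => e ∈ walkEdges l) := by
  ext l
  simp only [Set.mem_setOf_eq, Finset.coe_filter, Set.mem_setOf_eq,
    show ∀ l, l ∈ Q S T ↔ l ∈ ({l : List (NetVert m n) |
      IsGroupPath (↑(netEdges m n S)) src snk {x : NetVert m n | ∃ k ∈ T, x = grp k} l})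
      from fun l => by rw [groupPathSet_eq S T]; rfl, Set.mem_setOf_eq]

lemma finsum_groupPath_filter (f : List (NetVert m n) → ℝ) (e : NetVert m n × NetVert m n) :
    (∑ᶠ l ∈ {l : List (NetVert m n) |
        IsGroupPath (↑(netEdges m n S)) src snk {x : NetVert m n | ∃ k ∈ T, x = grp k} l
          ∧ e ∈ walkEdges l}, f l)
      = ∑ l ∈ (Q S T).filter (fun l => e ∈ walkEdges l), f l := by
  rw [filterSet_eq, finsum_mem_coe_finset]

lemma src_item_mem_walkEdges_path3 {j j' : Fin m} {k : Fin n} :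
    (src, item j) ∈ walkEdges (path3 j' k) ↔ j' = j := by
  rw [walkEdges_path3]; simp [eq_comm]

/-- The filtered path set for the edge `(src, item j)` is the image of the fiber. -/
lemma Qfilter_eq (j : Fin m) :
    (Q S T).filter (fun l => (src, item j) ∈ walkEdges l)
      = ((P S T).filter fun p => p.1 = j).image fun p => path3 p.1 p.2 := by
  ext l
  simp only [Q, Finset.mem_filter, Finset.mem_image, Prod.exists]
  constructor
  · rintro ⟨⟨a, b, hab, rfl⟩, hmem⟩
    exact ⟨a, b, ⟨hab, (src_item_mem_walkEdges_path3.mp hmem)⟩, rfl⟩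
  · rintro ⟨a, b, ⟨hab, rfl⟩, rfl⟩
    exact ⟨⟨a, b, hab, rfl⟩, src_item_mem_walkEdges_path3.mpr rfl⟩

/-- Upper bound: the value of any group flow is at most the coverage size. -/
lemma value_le (f : List (NetVert m n) → ℝ)
    (hf : IsGroupFlow (netEdges m n S) (netCap m n) src snk
      {x : NetVert m n | ∃ k ∈ T, x = grp k} f) :
    (∑ l ∈ Q S T, f l) ≤ ((T.biUnion S).card : ℝ) := by
  obtain ⟨hpos, hsupp, hcap⟩ := hf
  have hinj : Set.InjOn (fun p : Fin m × Fin n => path3 p.1 p.2) (P S T) := by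
    intro p _ q _ h
    obtain ⟨h1, h2⟩ := path3_inj h
    exact Prod.ext h1 h2
  rw [Q, Finset.sum_image fun p hp q hq h => hinj hp hq h]
  have hmaps : ∀ p ∈ P S T, p.1 ∈ T.biUnion S := by
    rintro ⟨a, b⟩ hp
    simp only [P, Finset.mem_filter] at hp
    exact Finset.mem_biUnion.mpr ⟨b, hp.2.2, hp.2.1⟩
  rw [← Finset.sum_fiberwise_of_maps_to hmaps fun p => f (path3 p.1 p.2)]
  have hbound : ∀ j ∈ T.biUnion S,
      (∑ p ∈ (P S T).filter (fun p => p.1 = j), f (path3 p.1 p.2)) ≤ 1 := by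
    intro j _
    have he : (src, item j) ∈ netEdges m n S := (mem_netEdges S).mpr (Or.inl ⟨j, rfl⟩)
    have := hcap _ he
    rw [finsum_groupPath_filter, Qfilter_eq] at this
    rw [Finset.sum_image fun p hp q hq h =>
      hinj (Finset.mem_filter.mp hp).1 (Finset.mem_filter.mp hq).1 h] at this
    simpa [netCap] using this
  calc (∑ j ∈ T.biUnion S, ∑ p ∈ (P S T).filter (fun p => p.1 = j), f (path3 p.1 p.2))
      ≤ ∑ _j ∈ T.biUnion S, (1 : ℝ) := Finset.sum_le_sum hbound
    _ = ((T.biUnion S).card : ℝ) := by simp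

/-- For each covered item, pick a group from `T` containing it. -/
noncomputable def pick (j : Fin m) (hj : j ∈ T.biUnion S) : Fin n :=
  (Finset.mem_biUnion.mp hj).choose

lemma pick_spec (j : Fin m) (hj : j ∈ T.biUnion S) :
    pick S T j hj ∈ T ∧ j ∈ S (pick S T j hj) := by
  obtain ⟨h1, h2⟩ := (Finset.mem_biUnion.mp hj).choose_spec
  exact ⟨h1, h2⟩

/-- The support of the optimal flow: one path per covered item. -/
noncomputable def pathSet : Finset (List (NetVert m n)) :=
  (T.biUnion S).attach.image fun j => path3 j.1 (pick S T j.1 j.2)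

lemma pathSet_subset : pathSet S T ⊆ Q S T := by
  intro l hl
  simp only [pathSet, Finset.mem_image] at hl
  obtain ⟨j, _, rfl⟩ := hl
  obtain ⟨h1, h2⟩ := pick_spec S T j.1 j.2
  simp only [Q, Finset.mem_image, Prod.exists]
  exact ⟨j.1, _, by simp [P, h1, h2], rfl⟩

lemma card_pathSet : (pathSet S T).card = (T.biUnion S).card := by
  rw [pathSet, Finset.card_image_of_injOn, Finset.card_attach]
  intro a _ b _ h
  exact Subtype.ext (path3_inj h).1

/-- The optimal flow: the indicator of `pathSet`. -/
noncomputable def optFlow (l : List (NetVert m n)) : ℝ :=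
  if l ∈ pathSet S T then 1 else 0

lemma optFlow_nonneg (l : List (NetVert m n)) : 0 ≤ optFlow S T l := by
  unfold optFlow; split <;> norm_num

lemma optFlow_sum (F : Finset (List (NetVert m n))) :
    (∑ l ∈ F, optFlow S T l) = ((F.filter fun l => l ∈ pathSet S T).card : ℝ) := by
  rw [Finset.card_filter]
  push_cast
  exact Finset.sum_congr rfl fun l _ => rfl

lemma optFlow_value : (∑ l ∈ Q S T, optFlow S T l) = ((T.biUnion S).card : ℝ) := by
  rw [optFlow_sum, ← card_pathSet S T]
  congr 2
  ext l
  simp only [Finset.mem_filter]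
  exact ⟨fun h => h.2, fun h => ⟨pathSet_subset S T h, h⟩⟩

lemma isGroupFlow_optFlow :
    IsGroupFlow (netEdges m n S) (netCap m n) src snk
      {x : NetVert m n | ∃ k ∈ T, x = grp k} (optFlow S T) := by
  refine ⟨optFlow_nonneg S T, ?_, ?_⟩
  · intro l hl
    rw [optFlow, if_neg]
    intro hmem
    apply hl
    simp only [pathSet, Finset.mem_image] at hmem
    obtain ⟨j, _, rfl⟩ := hmem
    obtain ⟨h1, h2⟩ := pick_spec S T j.1 j.2
    exact (isGroupPath_iff S T).mpr ⟨j.1, _, h2, h1, rfl⟩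
  · intro e he
    rw [finsum_groupPath_filter, optFlow_sum]
    rcases (mem_netEdges S).mp he with ⟨j, rfl⟩ | ⟨j, k, hjk, rfl⟩ | ⟨k, rfl⟩
    · -- capacity 1 on (src, item j): at most one supported path uses this edge
      have hcard : (((Q S T).filter fun l => (src, item j) ∈ walkEdges l).filter
          fun l => l ∈ pathSet S T).card ≤ 1 := by
        apply Finset.card_le_one.mpr
        intro a ha b hb
        simp only [Finset.mem_filter, pathSet, Finset.mem_image] at ha hb
        obtain ⟨⟨_, hea⟩, ⟨ja, _, rfl⟩⟩ := ha
        obtain ⟨⟨_, heb⟩, ⟨jb, _, rfl⟩⟩ := hb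
        have h1 : ja.1 = j := src_item_mem_walkEdges_path3.mp hea
        have h2 : jb.1 = j := src_item_mem_walkEdges_path3.mp heb
        have : ja = jb := Subtype.ext (h1.trans h2.symm)
        rw [this]
      calc ((((Q S T).filter fun l => (src, item j) ∈ walkEdges l).filter
            fun l => l ∈ pathSet S T).card : ℝ) ≤ 1 := by exact_mod_cast hcard
        _ = netCap m n (src, item j) := by simp [netCap]
    all_goals {
      refine le_trans (Nat.cast_le.mpr (Finset.card_le_card
        (fun l hl => (Finset.mem_filter.mp hl).2 : _ ⊆ pathSet S T))) ?_
      rw [card_pathSet]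
      have h1 : (T.biUnion S).card ≤ m := by
        simpa using Finset.card_le_univ (T.biUnion S)
      calc ((T.biUnion S).card : ℝ) ≤ (m : ℝ) := by exact_mod_cast h1
        _ = _ := by simp [netCap]
    }

end MaxCovAux

/-- In the maximum-coverage flow network, the group maximum flow through the set of
vertices `{grp k : k ∈ T}` equals the coverage size `|⋃ k ∈ T, S k|`. -/
theorem stmt12 (m n : ℕ) (S : Fin n → Finset (Fin m)) (T : Finset (Fin n)) :
    GF (netEdges m n S) (netCap m n) NetVert.src NetVert.snk
        {x : NetVert m n | ∃ k ∈ T, x = NetVert.grp k}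
      = ((T.biUnion S).card : ℝ) := by
  have hub : ∀ v ∈ {v : ℝ | ∃ f : List (NetVert m n) → ℝ,
      IsGroupFlow (netEdges m n S) (netCap m n) NetVert.src NetVert.snk
        {x : NetVert m n | ∃ k ∈ T, x = NetVert.grp k} f ∧
      v = ∑ᶠ l ∈ {l : List (NetVert m n) | IsGroupPath (↑(netEdges m n S)) NetVert.src
        NetVert.snk {x : NetVert m n | ∃ k ∈ T, x = NetVert.grp k} l}, f l},
      v ≤ ((T.biUnion S).card : ℝ) := by
    rintro v ⟨f, hf, rfl⟩
    rw [MaxCovAux.finsum_groupPath]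
    exact MaxCovAux.value_le S T f hf
  have hmem : ((T.biUnion S).card : ℝ) ∈ {v : ℝ | ∃ f : List (NetVert m n) → ℝ,
      IsGroupFlow (netEdges m n S) (netCap m n) NetVert.src NetVert.snk
        {x : NetVert m n | ∃ k ∈ T, x = NetVert.grp k} f ∧
      v = ∑ᶠ l ∈ {l : List (NetVert m n) | IsGroupPath (↑(netEdges m n S)) NetVert.src
        NetVert.snk {x : NetVert m n | ∃ k ∈ T, x = NetVert.grp k} l}, f l} :=
    ⟨MaxCovAux.optFlow S T, MaxCovAux.isGroupFlow_optFlow S T,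
      by rw [MaxCovAux.finsum_groupPath, MaxCovAux.optFlow_value]⟩
  exact le_antisymm (csSup_le ⟨_, hmem⟩ hub) (le_csSup ⟨_, hub⟩ hmem)
end

section
/- Let I = {i_1, …, i_m} be a finite set of m items, let S_1, …, S_n be subsets of I, and let N ≤ n be a positive integer. Construct the flow network with vertex set {s,t} ∪ {u_1,…,u_m} ∪ {v_1,…,v_n}, with an edge (s,u_j) of capacity 1 for every j, an edge (u_j,v_k) of capacity m whenever i_j ∈ S_k, and an edge (v_k,t) of capacity m for every k (capacity m never binds and plays the role of infinite capacity). Then the N-group maximum flow of this network, i.e., the maximum of GF(C) over all subsets C ⊆ V∖{s,t} with |C| ≤ N, equals the optimal value of the maximum coverage problem, i.e., the maximum of |⋃_{k∈T} S_k| over all subsets T ⊆ {1,…,n} with |T| ≤ N. -/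
section
open NetVert
variable {m n : ℕ} {S : Fin n → Finset (Fin m)}

def pathOf (j : Fin m) (k : Fin n) : List (NetVert m n) :=
  [src, item j, grp k, snk]

lemma mem_netEdges {e : NetVert m n × NetVert m n} : e ∈ netEdges m n S ↔
    (∃ j, e = (src, item j)) ∨ (∃ j k, j ∈ S k ∧ e = (item j, grp k)) ∨
    (∃ k, e = (grp k, snk)) := by
  simp only [netEdges, Finset.mem_union, Finset.mem_image, Finset.mem_filter,
    Finset.mem_univ, Finset.mem_product, true_and, and_true, Prod.exists]
  constructor
  · rintro ((⟨j, rfl⟩ | ⟨j, k, hjk, rfl⟩) | ⟨k, rfl⟩)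
    · exact Or.inl ⟨j, rfl⟩
    · exact Or.inr (Or.inl ⟨j, k, hjk, rfl⟩)
    · exact Or.inr (Or.inr ⟨k, rfl⟩)
  · rintro (⟨j, rfl⟩ | ⟨j, k, hjk, rfl⟩ | ⟨k, rfl⟩)
    · exact Or.inl (Or.inl ⟨j, rfl⟩)
    · exact Or.inl (Or.inr ⟨j, k, hjk, rfl⟩)
    · exact Or.inr ⟨k, rfl⟩

lemma walkEdges_pathOf (j : Fin m) (k : Fin n) :
    walkEdges (pathOf j k) = [(src, item j), ((item j : NetVert m n), grp k), ((grp k : NetVert m n), snk)] := by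
  simp [walkEdges, pathOf]

lemma pathOf_inj {j j' : Fin m} {k k' : Fin n} (h : pathOf j k = pathOf j' k') :
    j = j' ∧ k = k' := by
  simpa [pathOf] using h

end
section
open NetVert
variable {m n : ℕ} {S : Fin n → Finset (Fin m)}

lemma isWalk_iff {l : List (NetVert m n)} :
    IsWalk (↑(netEdges m n S)) src snk l ↔ ∃ j k, j ∈ S k ∧ l = pathOf j k := by
  constructor
  · rintro ⟨hne, hhd, hlast, hE⟩
    obtain _ | ⟨a, l⟩ := l
    · exact absurd rfl hne
    obtain rfl : a = src := by simpa using hhd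
    obtain _ | ⟨b, l⟩ := l
    · simp at hlast
    have hb : ((src : NetVert m n), b) ∈ netEdges m n S := by
      have := hE (src, b) (by simp [walkEdges]); simpa using this
    obtain ⟨j, rfl⟩ : ∃ j, b = item j := by
      rcases mem_netEdges.1 hb with ⟨j, h⟩ | ⟨j, k, _, h⟩ | ⟨k, h⟩ <;>
        simp_all
    obtain _ | ⟨c, l⟩ := l
    · simp at hlast
    have hc : ((item j : NetVert m n), c) ∈ netEdges m n S := by
      have := hE (item j, c) (by simp [walkEdges]); simpa using this
    obtain ⟨k, hk, rfl⟩ : ∃ k, j ∈ S k ∧ c = grp k := by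
      rcases mem_netEdges.1 hc with ⟨j', h⟩ | ⟨j', k, hjk, h⟩ | ⟨k, h⟩ <;> simp_all
    obtain _ | ⟨d, l⟩ := l
    · simp at hlast
    have hd : ((grp k : NetVert m n), d) ∈ netEdges m n S := by
      have := hE (grp k, d) (by simp [walkEdges]); simpa using this
    obtain rfl : d = snk := by
      rcases mem_netEdges.1 hd with ⟨j', h⟩ | ⟨j', k', _, h⟩ | ⟨k', h⟩ <;> simp_all
    obtain _ | ⟨e, l⟩ := l
    · exact ⟨j, k, hk, rfl⟩
    · exfalso
      have he : ((snk : NetVert m n), e) ∈ netEdges m n S := by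
        have := hE (snk, e) (by simp [walkEdges]); simpa using this
      rcases mem_netEdges.1 he with ⟨j', h⟩ | ⟨j', k', _, h⟩ | ⟨k', h⟩ <;> simp_all
  · rintro ⟨j, k, hjk, rfl⟩
    refine ⟨by simp [pathOf], by simp [pathOf], by simp [pathOf], ?_⟩
    intro p hp
    rw [walkEdges_pathOf] at hp
    simp only [List.mem_cons, List.not_mem_nil, or_false] at hp
    rcases hp with rfl | rfl | rfl
    · exact mem_netEdges.2 (Or.inl ⟨j, rfl⟩)
    · exact mem_netEdges.2 (Or.inr (Or.inl ⟨j, k, hjk, rfl⟩))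
    · exact mem_netEdges.2 (Or.inr (Or.inr ⟨k, rfl⟩))

lemma isGroupPath_iff {C : Set (NetVert m n)} (hsrc : src ∉ C) (hsnk : snk ∉ C)
    {l : List (NetVert m n)} :
    IsGroupPath (↑(netEdges m n S)) src snk C l ↔
      ∃ j k, j ∈ S k ∧ (item j ∈ C ∨ grp k ∈ C) ∧ l = pathOf j k := by
  constructor
  · rintro ⟨hw, hnd, x, hxC, hxl⟩
    obtain ⟨j, k, hjk, rfl⟩ := isWalk_iff.1 hw
    refine ⟨j, k, hjk, ?_, rfl⟩
    simp only [pathOf, List.mem_cons, List.not_mem_nil, or_false] at hxl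
    rcases hxl with rfl | rfl | rfl | rfl
    · exact absurd hxC hsrc
    · exact Or.inl hxC
    · exact Or.inr hxC
    · exact absurd hxC hsnk
  · rintro ⟨j, k, hjk, hC, rfl⟩
    refine ⟨isWalk_iff.2 ⟨j, k, hjk, rfl⟩, ?_, ?_⟩
    · rw [walkEdges_pathOf]; simp
    · rcases hC with h | h
      · exact ⟨item j, h, by simp [pathOf]⟩
      · exact ⟨grp k, h, by simp [pathOf]⟩
end
section
open NetVert
variable {m n : ℕ} (S : Fin n → Finset (Fin m))

/-- pairs (j,k) indexing group paths for group C -/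
def pairsOf (C : Finset (NetVert m n)) : Finset (Fin m × Fin n) :=
  (Finset.univ ×ˢ Finset.univ).filter
    (fun p => p.1 ∈ S p.2 ∧ (item p.1 ∈ C ∨ grp p.2 ∈ C))

variable {S}

lemma mem_pairsOf {C : Finset (NetVert m n)} {p : Fin m × Fin n} :
    p ∈ pairsOf S C ↔ p.1 ∈ S p.2 ∧ (item p.1 ∈ C ∨ grp p.2 ∈ C) := by
  simp [pairsOf]

lemma gpSet_eq {C : Finset (NetVert m n)}
    (hC : ∀ x ∈ C, x ≠ src ∧ x ≠ snk) :
    {l : List (NetVert m n) | IsGroupPath (↑(netEdges m n S)) src snk (↑C) l} =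
      ↑((pairsOf S C).image (fun p => pathOf p.1 p.2)) := by
  have hsrc : (src : NetVert m n) ∉ (↑C : Set (NetVert m n)) :=
    fun h => (hC _ h).1 rfl
  have hsnk : (snk : NetVert m n) ∉ (↑C : Set (NetVert m n)) :=
    fun h => (hC _ h).2 rfl
  ext l
  simp only [Set.mem_setOf_eq, Finset.coe_image, Set.mem_image, Finset.mem_coe,
    isGroupPath_iff hsrc hsnk, mem_pairsOf]
  constructor
  · rintro ⟨j, k, h1, h2, rfl⟩; exact ⟨(j, k), ⟨h1, by simpa using h2⟩, rfl⟩
  · rintro ⟨⟨j, k⟩, ⟨h1, h2⟩, rfl⟩; exact ⟨j, k, h1, by simpa using h2, rfl⟩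

lemma gpEdgeSet_eq {C : Finset (NetVert m n)}
    (hC : ∀ x ∈ C, x ≠ src ∧ x ≠ snk) (e : NetVert m n × NetVert m n) :
    {l : List (NetVert m n) | IsGroupPath (↑(netEdges m n S)) src snk (↑C) l ∧
        e ∈ walkEdges l} =
      ↑(((pairsOf S C).filter (fun p => e ∈ walkEdges (pathOf p.1 p.2))).image
          (fun p => pathOf p.1 p.2)) := by
  have hsrc : (src : NetVert m n) ∉ (↑C : Set (NetVert m n)) :=
    fun h => (hC _ h).1 rfl
  have hsnk : (snk : NetVert m n) ∉ (↑C : Set (NetVert m n)) :=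
    fun h => (hC _ h).2 rfl
  ext l
  simp only [Set.mem_setOf_eq, Finset.coe_image, Set.mem_image, Finset.mem_coe,
    isGroupPath_iff hsrc hsnk, mem_pairsOf, Finset.mem_filter]
  constructor
  · rintro ⟨⟨j, k, h1, h2, rfl⟩, he⟩
    exact ⟨(j, k), ⟨⟨h1, by simpa using h2⟩, he⟩, rfl⟩
  · rintro ⟨⟨j, k⟩, ⟨⟨h1, h2⟩, he⟩, rfl⟩
    exact ⟨⟨j, k, h1, by simpa using h2, rfl⟩, he⟩

lemma finsum_image (f : List (NetVert m n) → ℝ) (P : Finset (Fin m × Fin n)) :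
    (∑ᶠ l ∈ (↑(P.image (fun p => pathOf p.1 p.2)) : Set (List (NetVert m n))), f l)
      = ∑ p ∈ P, f (pathOf p.1 p.2) := by
  rw [finsum_mem_coe_finset]
  exact Finset.sum_image (fun p _ q _ h => by
    obtain ⟨h1, h2⟩ := pathOf_inj h
    exact Prod.ext h1 h2)
end
section
open NetVert
variable {m n : ℕ} (S : Fin n → Finset (Fin m))

/-- items covered by the group `C` -/
def coverSet (C : Finset (NetVert m n)) : Finset (Fin m) :=
  Finset.univ.filter (fun j => ∃ k, j ∈ S k ∧ (item j ∈ C ∨ grp k ∈ C))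

variable {S}

lemma flow_value_le {C : Finset (NetVert m n)}
    (hC : ∀ x ∈ C, x ≠ src ∧ x ≠ snk) {f : List (NetVert m n) → ℝ}
    (hf : IsGroupFlow (netEdges m n S) (netCap m n) src snk (↑C) f) :
    (∑ᶠ l ∈ {l : List (NetVert m n) |
        IsGroupPath (↑(netEdges m n S)) src snk (↑C) l}, f l)
      ≤ ((coverSet S C).card : ℝ) := by
  rw [gpSet_eq hC, finsum_image]
  have hmap : ∀ p ∈ pairsOf S C, p.1 ∈ coverSet S C := by
    intro p hp
    rw [mem_pairsOf] at hp
    exact Finset.mem_filter.2 ⟨Finset.mem_univ _, ⟨p.2, hp.1, hp.2⟩⟩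
  rw [← Finset.sum_fiberwise_of_maps_to hmap (fun p => f (pathOf p.1 p.2))]
  calc ∑ j ∈ coverSet S C, ∑ p ∈ (pairsOf S C).filter (fun p => p.1 = j),
          f (pathOf p.1 p.2)
      ≤ ∑ j ∈ coverSet S C, 1 := by
        refine Finset.sum_le_sum (fun j _ => ?_)
        have hedge : ((src : NetVert m n), item j) ∈ netEdges m n S :=
          mem_netEdges.2 (Or.inl ⟨j, rfl⟩)
        have hcap := hf.2.2 _ hedge
        rw [gpEdgeSet_eq hC, finsum_image] at hcap
        have hset : ((pairsOf S C).filter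
            (fun p => ((src : NetVert m n), item j) ∈ walkEdges (pathOf p.1 p.2)))
            = (pairsOf S C).filter (fun p => p.1 = j) := by
          apply Finset.filter_congr
          intro p _
          rw [walkEdges_pathOf]
          simp [eq_comm]
        rw [hset] at hcap
        simpa [netCap] using hcap
    _ = ((coverSet S C).card : ℝ) := by simp

lemma cover_le_coverage (hn : 0 < n) {C : Finset (NetVert m n)} :
    ∃ T : Finset (Fin n), T.card ≤ C.card ∧
      ((coverSet S C).card : ℝ) ≤ ((T.biUnion S).card : ℝ) := by
  classical
  set k0 : Fin n := ⟨0, hn⟩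
  set kc : Fin m → Fin n := fun j =>
    if h : ∃ k, j ∈ S k then h.choose else k0 with hkc
  set vi : NetVert m n → Fin n := fun x =>
    match x with
    | grp k => k
    | item j => kc j
    | _ => k0 with hvi
  refine ⟨C.image vi, le_trans Finset.card_image_le le_rfl, ?_⟩
  have : coverSet S C ⊆ (C.image vi).biUnion S := by
    intro j hj
    rw [coverSet, Finset.mem_filter] at hj
    obtain ⟨-, k, hjk, hCk⟩ := hj
    rw [Finset.mem_biUnion]
    rcases hCk with h | h
    · have hex : ∃ k, j ∈ S k := ⟨k, hjk⟩
      refine ⟨kc j, Finset.mem_image.2 ⟨item j, h, rfl⟩, ?_⟩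
      simpa [hkc, dif_pos hex] using hex.choose_spec
    · exact ⟨k, Finset.mem_image.2 ⟨grp k, h, rfl⟩, hjk⟩
  exact_mod_cast Finset.card_le_card this
end
section
open NetVert
variable {m n : ℕ} {S : Fin n → Finset (Fin m)}

lemma exists_flow (hn : 0 < n) (T : Finset (Fin n)) :
    ∃ f, IsGroupFlow (netEdges m n S) (netCap m n) src snk (↑(T.image (grp (m := m)))) f ∧
      (∑ᶠ l ∈ {l : List (NetVert m n) |
          IsGroupPath (↑(netEdges m n S)) src snk (↑(T.image (grp (m := m)))) l}, f l)
        = ((T.biUnion S).card : ℝ) := by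
  classical
  set C : Finset (NetVert m n) := T.image (grp (m := m)) with hCdef
  have hC : ∀ x ∈ C, x ≠ src ∧ x ≠ snk := by
    intro x hx
    obtain ⟨k, -, rfl⟩ := Finset.mem_image.1 hx
    exact ⟨by simp, by simp⟩
  set U : Finset (Fin m) := T.biUnion S with hUdef
  set k0 : Fin n := ⟨0, hn⟩
  set kc : Fin m → Fin n := fun j =>
    if h : ∃ k, k ∈ T ∧ j ∈ S k then h.choose else k0 with hkc
  have hkcT : ∀ j ∈ U, kc j ∈ T ∧ j ∈ S (kc j) := by
    intro j hj
    rw [hUdef, Finset.mem_biUnion] at hj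
    obtain ⟨k, hk, hjk⟩ := hj
    have hex : ∃ k, k ∈ T ∧ j ∈ S k := ⟨k, hk, hjk⟩
    rw [hkc]
    simpa [dif_pos hex] using hex.choose_spec
  set f : List (NetVert m n) → ℝ := fun l =>
    if ∃ j ∈ U, l = pathOf j (kc j) then 1 else 0 with hfdef
  have hfval : ∀ (j : Fin m) (k : Fin n),
      f (pathOf j k) = if j ∈ U ∧ k = kc j then 1 else 0 := by
    intro j k
    rw [hfdef]
    dsimp only
    rcases Classical.em (j ∈ U ∧ k = kc j) with h | h
    · rw [if_pos h, if_pos ⟨j, h.1, by rw [h.2]⟩]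
    · rw [if_neg h, if_neg]
      rintro ⟨j', hj', he⟩
      obtain ⟨rfl, rfl⟩ := pathOf_inj he
      exact h ⟨hj', rfl⟩
  have hfilter : (pairsOf S C).filter (fun p => p.1 ∈ U ∧ p.2 = kc p.1)
      = U.image (fun j => (j, kc j)) := by
    ext p
    simp only [Finset.mem_filter, Finset.mem_image, mem_pairsOf]
    constructor
    · rintro ⟨-, h1, h2⟩
      exact ⟨p.1, h1, by rw [← h2]⟩
    · rintro ⟨j, hj, rfl⟩
      obtain ⟨h1, h2⟩ := hkcT j hj
      exact ⟨⟨h2, Or.inr (Finset.mem_image.2 ⟨kc j, h1, rfl⟩)⟩, hj, rfl⟩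
  have himg : ((pairsOf S C).filter (fun p => p.1 ∈ U ∧ p.2 = kc p.1)).card
      = U.card := by
    rw [hfilter]
    exact Finset.card_image_of_injective _ (fun a b h => (Prod.ext_iff.1 h).1)
  have hsum : ∀ Q : Finset (Fin m × Fin n),
      ∑ p ∈ Q, f (pathOf p.1 p.2)
        = ((Q.filter (fun p => p.1 ∈ U ∧ p.2 = kc p.1)).card : ℝ) := by
    intro Q
    rw [Finset.card_filter]
    push_cast
    refine Finset.sum_congr rfl (fun p _ => ?_)
    rw [hfval]
  have hvalue : ∑ p ∈ pairsOf S C, f (pathOf p.1 p.2) = (U.card : ℝ) := by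
    rw [hsum, himg]
  have hcardm : ∀ Q : Finset (Fin m × Fin n), Q ⊆ pairsOf S C →
      ((Q.filter (fun p => p.1 ∈ U ∧ p.2 = kc p.1)).card : ℝ) ≤ (m : ℝ) := by
    intro Q hQ
    have h1 : (Q.filter (fun p => p.1 ∈ U ∧ p.2 = kc p.1)).card
        ≤ ((pairsOf S C).filter (fun p => p.1 ∈ U ∧ p.2 = kc p.1)).card :=
      Finset.card_le_card (Finset.filter_subset_filter _ hQ)
    rw [himg] at h1
    have h2 : U.card ≤ m := le_trans (Finset.card_le_univ U) (le_of_eq (by simp))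
    exact_mod_cast le_trans h1 h2
  have hflow : IsGroupFlow (netEdges m n S) (netCap m n) src snk (↑C) f := by
    refine ⟨fun l => ?_, fun l hl => ?_, fun e he => ?_⟩
    · rw [hfdef]; dsimp only; split <;> norm_num
    · rw [hfdef]; dsimp only
      rw [if_neg]
      rintro ⟨j, hj, rfl⟩
      obtain ⟨h1, h2⟩ := hkcT j hj
      exact hl (⟨isWalk_iff.2 ⟨j, kc j, h2, rfl⟩, by rw [walkEdges_pathOf]; simp,
        ⟨grp (kc j), Finset.mem_coe.2 (Finset.mem_image.2 ⟨kc j, h1, rfl⟩),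
          by simp [pathOf]⟩⟩)
    · rw [gpEdgeSet_eq hC, finsum_image, hsum]
      rcases mem_netEdges.1 he with ⟨j, rfl⟩ | ⟨j, k, hjk, rfl⟩ | ⟨k, rfl⟩
      · -- capacity 1 edge
        have hsub : ((pairsOf S C).filter
            (fun p => ((src : NetVert m n), item j) ∈ walkEdges (pathOf p.1 p.2))).filter
              (fun p => p.1 ∈ U ∧ p.2 = kc p.1) ⊆ {(j, kc j)} := by
          intro p hp
          simp only [Finset.mem_filter, walkEdges_pathOf, List.mem_cons,
            List.not_mem_nil, or_false, Prod.mk.injEq, mem_pairsOf] at hp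
          obtain ⟨⟨-, hpe⟩, -, hp2⟩ := hp
          have hpj : p.1 = j := by
            simp only [reduceCtorEq, false_and, and_false, or_false, and_true,
              true_and, NetVert.item.injEq, false_or, or_self] at hpe
            exact hpe.symm
          have : p = (j, kc j) := Prod.ext hpj (by rw [hp2, hpj])
          simp [this]
        have := Finset.card_le_card hsub
        simp only [Finset.card_singleton] at this
        calc ((((pairsOf S C).filter _).filter _).card : ℝ)
            ≤ ((1 : ℕ) : ℝ) := by exact_mod_cast this
          _ ≤ netCap m n (src, item j) := by norm_num [netCap]
      · exact le_trans (hcardm _ (Finset.filter_subset _ _)) le_rfl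
      · exact le_trans (hcardm _ (Finset.filter_subset _ _)) le_rfl
  refine ⟨f, hflow, ?_⟩
  rw [gpSet_eq hC, finsum_image, hvalue]
end
section
open NetVert
variable {m n : ℕ} {S : Fin n → Finset (Fin m)}

lemma netCap_nonneg (e : NetVert m n × NetVert m n) : 0 ≤ netCap m n e := by
  obtain ⟨a, b⟩ := e
  cases a <;> cases b <;> simp [netCap]

lemma zero_mem_valueSet (C : Set (NetVert m n)) :
    (0 : ℝ) ∈ {v : ℝ | ∃ f : List (NetVert m n) → ℝ,
      IsGroupFlow (netEdges m n S) (netCap m n) src snk C f ∧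
      v = ∑ᶠ l ∈ {l : List (NetVert m n) |
          IsGroupPath (↑(netEdges m n S)) src snk C l}, f l} := by
  refine ⟨fun _ => 0, ⟨fun _ => le_rfl, fun _ _ => rfl, fun e _ => ?_⟩, by simp⟩
  simpa using netCap_nonneg e

lemma GF_le {C : Finset (NetVert m n)} (hC : ∀ x ∈ C, x ≠ src ∧ x ≠ snk) :
    GF (netEdges m n S) (netCap m n) src snk (↑C) ≤ ((coverSet S C).card : ℝ) := by
  refine csSup_le ⟨0, zero_mem_valueSet _⟩ ?_
  rintro v ⟨f, hf, rfl⟩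
  exact flow_value_le hC hf

lemma le_GF (hn : 0 < n) (T : Finset (Fin n)) :
    ((T.biUnion S).card : ℝ)
      ≤ GF (netEdges m n S) (netCap m n) src snk (↑(T.image (grp (m := m)))) := by
  have hC : ∀ x ∈ T.image (grp (m := m)), x ≠ src ∧ x ≠ snk := by
    intro x hx
    obtain ⟨k, -, rfl⟩ := Finset.mem_image.1 hx
    exact ⟨by simp, by simp⟩
  obtain ⟨f, hf, hv⟩ := exists_flow (S := S) hn T
  refine le_csSup ⟨((coverSet S (T.image (grp (m := m)))).card : ℝ), ?_⟩ ⟨f, hf, hv.symm⟩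
  rintro v ⟨g, hg, rfl⟩
  exact flow_value_le hC hg
end
/-- The `N`-group maximum flow of the maximum-coverage flow network equals the optimal
value of the corresponding maximum coverage problem. -/
theorem stmt13 (m n : ℕ) (S : Fin n → Finset (Fin m)) (N : ℕ) (hN : 0 < N) (hNn : N ≤ n) :
    sSup {v : ℝ | ∃ C : Finset (NetVert m n),
        (∀ x ∈ C, x ≠ NetVert.src ∧ x ≠ NetVert.snk) ∧ C.card ≤ N ∧
        v = GF (netEdges m n S) (netCap m n) NetVert.src NetVert.snk (↑C)}
      = sSup {v : ℝ | ∃ T : Finset (Fin n), T.card ≤ N ∧ v = ((T.biUnion S).card : ℝ)} := by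
  have hn : 0 < n := lt_of_lt_of_le hN hNn
  set A := {v : ℝ | ∃ C : Finset (NetVert m n),
      (∀ x ∈ C, x ≠ NetVert.src ∧ x ≠ NetVert.snk) ∧ C.card ≤ N ∧
      v = GF (netEdges m n S) (netCap m n) NetVert.src NetVert.snk (↑C)} with hA
  set B := {v : ℝ | ∃ T : Finset (Fin n), T.card ≤ N ∧ v = ((T.biUnion S).card : ℝ)} with hB
  have hAne : A.Nonempty :=
    ⟨_, ⟨∅, by simp, by simp, rfl⟩⟩
  have hBne : B.Nonempty := ⟨0, ⟨∅, by simp, by simp⟩⟩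
  have hBbdd : BddAbove B := by
    refine ⟨(m : ℝ), ?_⟩
    rintro v ⟨T, -, rfl⟩
    exact_mod_cast le_trans (Finset.card_le_univ _) (le_of_eq (by simp))
  have hAbdd : BddAbove A := by
    refine ⟨(m : ℝ), ?_⟩
    rintro v ⟨C, hC, -, rfl⟩
    refine le_trans (GF_le hC) ?_
    exact_mod_cast le_trans (Finset.card_le_univ _) (le_of_eq (by simp))
  apply le_antisymm
  · refine csSup_le hAne ?_
    rintro v ⟨C, hC, hCcard, rfl⟩
    obtain ⟨T, hTcard, hTle⟩ := cover_le_coverage (S := S) hn (C := C)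
    refine le_trans (GF_le hC) (le_trans hTle ?_)
    exact le_csSup hBbdd ⟨T, le_trans hTcard hCcard, rfl⟩
  · refine csSup_le hBne ?_
    rintro v ⟨T, hTcard, rfl⟩
    refine le_trans (le_GF hn T) ?_
    refine le_csSup hAbdd ⟨T.image (NetVert.grp (m := m)), ?_, ?_, rfl⟩
    · intro x hx
      obtain ⟨k, -, rfl⟩ := Finset.mem_image.1 hx
      exact ⟨by simp, by simp⟩
    · exact le_trans Finset.card_image_le hTcard
end
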